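/- Let f : ℝⁿ × ℝᵐ → ℝ be twice continuously differentiable with ∇f Lipschitz with constant L, and let 0 < α < 1/(2L). Let (x*,y*) be a critical point of f that is GDA-stable, i.e., the spectral radius of the Jacobian J_GDA = I + αH(x*,y*) of the GDA map at (x*,y*) is at most 1. Then the spectral radius of the Jacobian of the OGDA map at the fixed point (x*,y*,x*,y*) is at most 1, i.e., (x*,y*,x*,y*) is OGDA-stable. -/

import Mathlib

open Filter Topology MeasureTheory Matrix

noncomputable section

abbrev Euc (n : ℕ) : Type := EuclideanSpace ℝ (Fin n)

/-- Partial gradient of `f` with respect to the first (`x`) variable. -/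
noncomputable def gradX {n m : ℕ} (f : Euc n × Euc m → ℝ) (p : Euc n × Euc m) : Euc n :=
  gradient (fun x => f (x, p.2)) p.1

/-- Partial gradient of `f` with respect to the second (`y`) variable. -/
noncomputable def gradY {n m : ℕ} (f : Euc n × Euc m → ℝ) (p : Euc n × Euc m) : Euc m :=
  gradient (fun y => f (p.1, y)) p.2

/-- The GDA (gradient descent/ascent) update map with step size `α`:
`h(x,y) = (x - α ∇ₓ f(x,y), y + α ∇ᵧ f(x,y))`. -/
noncomputable def gda {n m : ℕ} (f : Euc n × Euc m → ℝ) (α : ℝ) (p : Euc n × Euc m) :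
    Euc n × Euc m :=
  (p.1 - α • gradX f p, p.2 + α • gradY f p)

/-- The standard basis vectors of `ℝⁿ × ℝᵐ`. -/
noncomputable def bVec (n m : ℕ) : Fin n ⊕ Fin m → Euc n × Euc m
  | Sum.inl i => (EuclideanSpace.single i 1, 0)
  | Sum.inr j => (0, EuclideanSpace.single j 1)

/-- Second directional derivative of `f` at `p` in directions `u, v`. -/
noncomputable def dD {n m : ℕ} (f : Euc n × Euc m → ℝ) (p u v : Euc n × Euc m) : ℝ :=
  fderiv ℝ (fun q => fderiv ℝ f q v) p u

/-- The matrix `H = [[-∇²ₓₓ f, -∇²ₓᵧ f], [∇²ᵧₓ f, ∇²ᵧᵧ f]]` of `f` at `p`. -/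
noncomputable def Hmat {n m : ℕ} (f : Euc n × Euc m → ℝ) (p : Euc n × Euc m) :
    Matrix (Fin n ⊕ Fin m) (Fin n ⊕ Fin m) ℝ :=
  Matrix.of fun i j =>
    (Sum.elim (fun _ => (-1 : ℝ)) (fun _ => (1 : ℝ)) i) * dD f p (bVec n m i) (bVec n m j)

/-- The set of complex eigenvalues of a real square matrix. -/
noncomputable def specC {ι : Type} [Fintype ι] [DecidableEq ι] (M : Matrix ι ι ℝ) : Set ℂ :=
  spectrum ℂ (M.map (Complex.ofReal))

/-- The Jacobian `I + αH` of the GDA update map at `p`. -/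
noncomputable def Jgda {n m : ℕ} (f : Euc n × Euc m → ℝ) (α : ℝ) (p : Euc n × Euc m) :
    Matrix (Fin n ⊕ Fin m) (Fin n ⊕ Fin m) ℝ :=
  1 + α • Hmat f p

/-- The OGDA (optimistic gradient descent/ascent) update map with step size `α`,
acting on pairs `((x_t, y_t), (x_{t-1}, y_{t-1}))`. -/
noncomputable def ogda {n m : ℕ} (f : Euc n × Euc m → ℝ) (α : ℝ)
    (q : (Euc n × Euc m) × (Euc n × Euc m)) : (Euc n × Euc m) × (Euc n × Euc m) :=
  ((q.1.1 - (2 * α) • gradX f q.1 + α • gradX f q.2,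
    q.1.2 + (2 * α) • gradY f q.1 - α • gradY f q.2), q.1)

/-- The full Hessian matrix `∇²f` of `f` at `p`. -/
noncomputable def hessMat {n m : ℕ} (f : Euc n × Euc m → ℝ) (p : Euc n × Euc m) :
    Matrix (Fin n ⊕ Fin m) (Fin n ⊕ Fin m) ℝ :=
  Matrix.of fun i j => dD f p (bVec n m i) (bVec n m j)

/-- The Jacobian of the OGDA update map at a fixed point `(p, p)`, in block form
`[[I + 2αH, -αH], [I, 0]]` where `H = H(p)`. -/
noncomputable def Jogda {n m : ℕ} (f : Euc n × Euc m → ℝ) (α : ℝ) (p : Euc n × Euc m) :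
    Matrix ((Fin n ⊕ Fin m) ⊕ (Fin n ⊕ Fin m)) ((Fin n ⊕ Fin m) ⊕ (Fin n ⊕ Fin m)) ℝ :=
  Matrix.fromBlocks (1 + (2 * α) • Hmat f p) ((-α) • Hmat f p) 1 0

/-!
An eigenvalue `μ` of the OGDA Jacobian `[[I + 2αH, -αH], [I, 0]]` has an eigenvector of the form
`(μw, w)`, and then `αλ(2μ - 1) = μ² - μ` for an eigenvalue `λ` of `H` (with eigenvector `w`).
Since `1 + αλ` is an eigenvalue of the GDA Jacobian `I + αH`, stability gives `‖1 + αλ‖ ≤ 1`,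
and since `H` is, up to the sign of its `x`-rows, the derivative of the `L`-Lipschitz map
`(∇ₓf, ∇ᵧf)`, also `‖αλ‖ ≤ αL ≤ 1/2`. An elementary computation in the plane shows that these two
constraints on `c = αλ` force `‖μ‖ ≤ 1`.
-/

theorem le_of_forall_pow_mul_le {a b c C : ℝ} (hb : 0 ≤ b) (hc : 0 < c)
    (h : ∀ k : ℕ, a ^ k * c ≤ b ^ k * C) : a ≤ b := by
  by_contra! hba
  have ha : 0 < a := hb.trans_lt hba
  have hsmall : ∀ᶠ k : ℕ in atTop, (b / a) ^ k * C < c :=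
    ((tendsto_pow_atTop_nhds_zero_of_lt_one (div_nonneg hb ha.le)
      ((div_lt_one ha).2 hba)).mul_const C).eventually (gt_mem_nhds (by simpa using hc))
  obtain ⟨k, hk⟩ := hsmall.exists
  have hak : 0 < a ^ k := pow_pos ha k
  have := h k
  rw [show b ^ k = (b / a) ^ k * a ^ k by rw [div_pow, div_mul_cancel₀ _ hak.ne']] at this
  nlinarith

namespace Matrix

theorem mem_spectrum_iff_exists_mulVec_eq_smul {K ι : Type*} [Field K] [Fintype ι]
    [DecidableEq ι] {A : Matrix ι ι K} {μ : K} :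
    μ ∈ spectrum K A ↔ ∃ v ≠ 0, A *ᵥ v = μ • v := by
  rw [← spectrum_toLin', ← Module.End.hasEigenvalue_iff_mem_spectrum]
  constructor
  · intro h
    obtain ⟨v, hv⟩ := h.exists_hasEigenvector
    exact ⟨v, hv.2, by simpa using hv.apply_eq_smul⟩
  · rintro ⟨v, hv, hAv⟩
    exact Module.End.hasEigenvalue_of_hasEigenvector
      ⟨Module.End.mem_eigenspace_iff.2 (by simpa using hAv), hv⟩

section Field

variable {K ι : Type*} [Field K] [Fintype ι] [DecidableEq ι] {A : Matrix ι ι K}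

theorem one_add_mul_mem_spectrum {a lam : K} (hlam : lam ∈ spectrum K A) :
    1 + a * lam ∈ spectrum K (1 + a • A) := by
  obtain ⟨v, hv, hAv⟩ := mem_spectrum_iff_exists_mulVec_eq_smul.1 hlam
  refine mem_spectrum_iff_exists_mulVec_eq_smul.2 ⟨v, hv, ?_⟩
  rw [add_mulVec, one_mulVec, smul_mulVec, hAv, smul_smul, add_smul, one_smul]

theorem exists_mem_spectrum_of_mem_spectrum_fromBlocks {a μ : K} (ha : a ≠ 0)
    (hμ : μ ∈ spectrum K (fromBlocks (1 + (2 * a) • A) ((-a) • A) (1 : Matrix ι ι K) 0)) :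
    ∃ lam ∈ spectrum K A, a * lam * (2 * μ - 1) = μ ^ 2 - μ := by
  obtain ⟨v, hv, hJv⟩ := mem_spectrum_iff_exists_mulVec_eq_smul.1 hμ
  obtain ⟨u, w, rfl⟩ : ∃ u w, v = Sum.elim u w :=
    ⟨v ∘ Sum.inl, v ∘ Sum.inr, (Sum.elim_comp_inl_inr v).symm⟩
  rw [fromBlocks_mulVec] at hJv
  have h₁ := fun k => congrFun hJv (Sum.inl k)
  have h₂ := fun k => congrFun hJv (Sum.inr k)
  simp only [Sum.elim_comp_inl, Sum.elim_comp_inr, Sum.elim_inl, Sum.elim_inr, Pi.add_apply,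
    Pi.smul_apply, one_mulVec, zero_mulVec, smul_eq_mul, add_zero] at h₁ h₂
  obtain rfl : u = μ • w := funext h₂
  have hw : w ≠ 0 := fun hw => hv <| by simp [hw]
  have hAw : (a * (2 * μ - 1)) • (A *ᵥ w) = (μ ^ 2 - μ) • w := by
    funext k
    have hk := h₁ k
    simp only [add_mulVec, smul_mulVec, mulVec_smul, one_mulVec, Pi.add_apply, Pi.smul_apply,
      smul_eq_mul] at hk ⊢
    linear_combination hk
  have hc : a * (2 * μ - 1) ≠ 0 := by
    intro hc
    rw [hc, zero_smul, eq_comm, smul_eq_zero_iff_left hw] at hAw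
    have h2μ : 2 * μ - 1 = 0 := (mul_eq_zero.1 hc).resolve_left ha
    exact one_ne_zero (by linear_combination (2 * μ - 1) * h2μ - 4 * hAw : (1 : K) = 0)
  refine ⟨(μ ^ 2 - μ) / (a * (2 * μ - 1)),
    mem_spectrum_iff_exists_mulVec_eq_smul.2 ⟨w, hw, ?_⟩, ?_⟩
  · rw [div_eq_inv_mul, ← smul_smul, ← hAw, smul_smul, inv_mul_cancel₀ hc, one_smul]
  · rw [show ∀ x, a * x * (2 * μ - 1) = x * (a * (2 * μ - 1)) from fun x => by ring,
      div_mul_cancel₀ _ hc]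

end Field

theorem re_map_ofReal_mulVec {ι : Type*} [Fintype ι] (M : Matrix ι ι ℝ) (u : ι → ℂ) (i : ι) :
    ((M.map Complex.ofReal *ᵥ u) i).re = (M *ᵥ fun j => (u j).re) i := by
  simp [mulVec, dotProduct]

theorem im_map_ofReal_mulVec {ι : Type*} [Fintype ι] (M : Matrix ι ι ℝ) (u : ι → ℂ) (i : ι) :
    ((M.map Complex.ofReal *ᵥ u) i).im = (M *ᵥ fun j => (u j).im) i := by
  simp [mulVec, dotProduct]

/-- Bounds by the operator norm of `M` hold for the complex eigenvalues of `M` as well, because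
the real and imaginary parts of `(M.map ofReal)ᵏ v` are `Mᵏ (re v)` and `Mᵏ (im v)`. -/
theorem norm_le_of_mem_spectrum_map_ofReal {ι E : Type*} [Fintype ι] [DecidableEq ι]
    [NormedAddCommGroup E] [NormedSpace ℝ E] (e : (ι → ℝ) ≃L[ℝ] E) {M : Matrix ι ι ℝ} {L : ℝ}
    (hL : 0 ≤ L) (hM : ∀ w, ‖e (M *ᵥ w)‖ ≤ L * ‖e w‖) {μ : ℂ}
    (hμ : μ ∈ spectrum ℂ (M.map Complex.ofReal)) : ‖μ‖ ≤ L := by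
  obtain ⟨v, hv, hMv⟩ := mem_spectrum_iff_exists_mulVec_eq_smul.1 hμ
  obtain ⟨i, hi⟩ := Function.ne_iff.1 hv
  let N : (ι → ℂ) → ℝ := fun u => ‖e fun j => (u j).re‖ + ‖e fun j => (u j).im‖
  have hNM : ∀ u, N (M.map Complex.ofReal *ᵥ u) ≤ L * N u := fun u => by
    simp only [N, re_map_ofReal_mulVec, im_map_ofReal_mulVec, mul_add]
    exact add_le_add (hM _) (hM _)
  have hpow : ∀ k : ℕ, N (μ ^ k • v) ≤ L ^ k * N v := by
    intro k
    induction k with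
    | zero => simp
    | succ k ih =>
      calc N (μ ^ (k + 1) • v) = N (M.map Complex.ofReal *ᵥ (μ ^ k • v)) := by
            rw [mulVec_smul, hMv, smul_smul, pow_succ]
        _ ≤ L * (L ^ k * N v) := (hNM _).trans (mul_le_mul_of_nonneg_left ih hL)
        _ = L ^ (k + 1) * N v := by ring
  set C := ‖(e.symm : E →L[ℝ] ι → ℝ)‖
  have hcoord : ∀ (w : ι → ℝ) j, |w j| ≤ C * ‖e w‖ := fun w j =>
    calc |w j| ≤ ‖w‖ := norm_le_pi_norm w j
      _ = ‖(e.symm : E →L[ℝ] ι → ℝ) (e w)‖ := by simp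
      _ ≤ C * ‖e w‖ := ContinuousLinearMap.le_opNorm _ _
  refine le_of_forall_pow_mul_le (C := C * N v) hL (norm_pos_iff.2 hi) fun k => ?_
  calc ‖μ‖ ^ k * ‖v i‖ = ‖(μ ^ k • v) i‖ := by simp
    _ ≤ |((μ ^ k • v) i).re| + |((μ ^ k • v) i).im| := Complex.norm_le_abs_re_add_abs_im _
    _ ≤ C * N (μ ^ k • v) := by
        rw [mul_add]
        exact add_le_add (hcoord (fun j => ((μ ^ k • v) j).re) i)
          (hcoord (fun j => ((μ ^ k • v) j).im) i)
    _ ≤ L ^ k * (C * N v) := by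
        rw [mul_left_comm]
        exact mul_le_mul_of_nonneg_left (hpow k) (norm_nonneg _)

end Matrix

theorem Complex.norm_le_one_of_mul_two_mul_sub_one_eq {μ c : ℂ} (hc : ‖c‖ ≤ 1 / 2)
    (hc₁ : ‖1 + c‖ ≤ 1) (h : c * (2 * μ - 1) = μ ^ 2 - μ) : ‖μ‖ ≤ 1 := by
  have hB : ‖μ ^ 2 - μ‖ ^ 2 * 4 ≤ ‖2 * μ - 1‖ ^ 2 := by
    have : ‖c‖ ^ 2 * 4 ≤ 1 := by nlinarith [norm_nonneg c]
    rw [← h, norm_mul, mul_pow]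
    nlinarith [sq_nonneg ‖2 * μ - 1‖]
  have hAB : ‖μ ^ 2 + μ - 1‖ ^ 2 ≤ ‖2 * μ - 1‖ ^ 2 := by
    rw [show μ ^ 2 + μ - 1 = (1 + c) * (2 * μ - 1) by linear_combination -h, norm_mul, mul_pow]
    exact mul_le_of_le_one_left (sq_nonneg _) (pow_le_one₀ (norm_nonneg _) hc₁)
  rw [← sq_le_one_iff₀ (norm_nonneg μ)]
  simp only [Complex.sq_norm] at hB hAB ⊢
  simp only [Complex.normSq_apply, sq, Complex.mul_re, Complex.mul_im,
    Complex.sub_re, Complex.sub_im, Complex.add_re, Complex.add_im, Complex.one_re,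
    Complex.one_im, Complex.re_ofNat, Complex.im_ofNat] at hB hAB ⊢
  set x := μ.re
  set y := μ.im
  by_contra! hs
  -- with `s = x² + y² > 1`, `hB` reads `(2s - 1)(2s + 1 - 4x) ≤ 0`
  have h₁ : 2 * (x ^ 2 + y ^ 2) + 1 ≤ 4 * x := by nlinarith
  nlinarith [sq_nonneg y, sq_nonneg (x - 1), mul_nonneg (sub_nonneg.2 h₁) (sq_nonneg y)]

theorem EuclideanSpace.gradient_apply {ι : Type*} [Fintype ι] [DecidableEq ι]
    (g : EuclideanSpace ℝ ι → ℝ) (x : EuclideanSpace ℝ ι) (k : ι) :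
    gradient g x k = fderiv ℝ g x (EuclideanSpace.single k 1) := by
  have h := InnerProductSpace.toDual_symm_apply (x := EuclideanSpace.single k (1 : ℝ))
    (y := fderiv ℝ g x)
  rw [EuclideanSpace.inner_single_right] at h
  simpa [gradient] using h

def piSumEquivEucProd (n m : ℕ) : (Fin n ⊕ Fin m → ℝ) ≃L[ℝ] Euc n × Euc m :=
  (ContinuousLinearEquiv.sumPiEquivProdPi ℝ (Fin n) (Fin m) fun _ => ℝ).trans
    ((EuclideanSpace.equiv (Fin n) ℝ).symm.prodCongr (EuclideanSpace.equiv (Fin m) ℝ).symm)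

section

variable {n m : ℕ} {f : Euc n × Euc m → ℝ} {p : Euc n × Euc m}

@[simp]
theorem piSumEquivEucProd_apply_fst (w : Fin n ⊕ Fin m → ℝ) (k : Fin n) :
    (piSumEquivEucProd n m w).1 k = w (Sum.inl k) := rfl

@[simp]
theorem piSumEquivEucProd_apply_snd (w : Fin n ⊕ Fin m → ℝ) (k : Fin m) :
    (piSumEquivEucProd n m w).2 k = w (Sum.inr k) := rfl

theorem piSumEquivEucProd_single (i : Fin n ⊕ Fin m) :
    piSumEquivEucProd n m (Pi.single i 1) = bVec n m i := by
  rcases i with i | i <;> ext k <;> simp [bVec, Pi.single_apply]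

theorem piSumEquivEucProd_eq_sum (w : Fin n ⊕ Fin m → ℝ) :
    piSumEquivEucProd n m w = ∑ j, w j • bVec n m j := by
  conv_lhs => rw [← (Pi.basisFun ℝ _).sum_repr w]
  simp only [map_sum, map_smul, Pi.basisFun_repr, Pi.basisFun_apply, piSumEquivEucProd_single]


theorem gradX_apply (hf : DifferentiableAt ℝ f p) (k : Fin n) :
    gradX f p k = fderiv ℝ f p (bVec n m (Sum.inl k)) := by
  have hd : HasFDerivAt (fun x => f (x, p.2))
      ((fderiv ℝ f p).comp (ContinuousLinearMap.inl ℝ _ _)) p.1 :=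
    hf.hasFDerivAt.comp p.1 (hasFDerivAt_prodMk_left p.1 p.2)
  simp [gradX, EuclideanSpace.gradient_apply, hd.fderiv, bVec]

theorem gradY_apply (hf : DifferentiableAt ℝ f p) (k : Fin m) :
    gradY f p k = fderiv ℝ f p (bVec n m (Sum.inr k)) := by
  have hd : HasFDerivAt (fun y => f (p.1, y))
      ((fderiv ℝ f p).comp (ContinuousLinearMap.inr ℝ _ _)) p.2 :=
    hf.hasFDerivAt.comp p.2 (hasFDerivAt_prodMk_right p.1 p.2)
  simp [gradY, EuclideanSpace.gradient_apply, hd.fderiv, bVec]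

theorem gradX_gradY_eq_piSumEquivEucProd (hf : DifferentiableAt ℝ f p) :
    (gradX f p, gradY f p) = piSumEquivEucProd n m fun i => fderiv ℝ f p (bVec n m i) := by
  ext k <;> simp [gradX_apply hf, gradY_apply hf]

theorem dD_eq_fderiv_fderiv (hf : DifferentiableAt ℝ (fderiv ℝ f) p) (u v : Euc n × Euc m) :
    dD f p u v = fderiv ℝ (fderiv ℝ f) p u v := by
  simp [dD, fderiv_clm_apply hf (differentiableAt_const v)]

theorem norm_hessMat_mulVec_le {K : NNReal} (hf : ContDiff ℝ 2 f)
    (hK : LipschitzWith K fun q => (gradX f q, gradY f q)) (w : Fin n ⊕ Fin m → ℝ) :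
    ‖piSumEquivEucProd n m (hessMat f p *ᵥ w)‖ ≤ K * ‖piSumEquivEucProd n m w‖ := by
  set e := piSumEquivEucProd n m
  have hD : HasFDerivAt (fderiv ℝ f) (fderiv ℝ (fderiv ℝ f) p) p :=
    ((hf.fderiv_right le_rfl).differentiable one_ne_zero p).hasFDerivAt
  have hsymm : IsSymmSndFDerivAt ℝ f p := hf.contDiffAt.isSymmSndFDerivAt (by simp)
  let Φ : ((Euc n × Euc m) →L[ℝ] ℝ) →L[ℝ] Euc n × Euc m :=
    (e : (Fin n ⊕ Fin m → ℝ) →L[ℝ] Euc n × Euc m) ∘L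
      ContinuousLinearMap.pi fun i => ContinuousLinearMap.apply ℝ ℝ (bVec n m i)
  let T := Φ ∘L fderiv ℝ (fderiv ℝ f) p
  have hT : HasFDerivAt (fun q => (gradX f q, gradY f q)) T p := by
    have hG : (fun q => (gradX f q, gradY f q)) = fun q => Φ (fderiv ℝ f q) :=
      funext fun q => gradX_gradY_eq_piSumEquivEucProd ((hf.differentiable two_ne_zero) q)
    exact hG ▸ Φ.hasFDerivAt.comp p hD
  have hTe : T (e w) = e (hessMat f p *ᵥ w) := by
    refine congrArg e (funext fun i => ?_)
    simp [e, piSumEquivEucProd_eq_sum, Matrix.mulVec, dotProduct, hessMat,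
      dD_eq_fderiv_fderiv hD.differentiableAt, hsymm.eq, mul_comm]
  calc ‖e (hessMat f p *ᵥ w)‖ = ‖T (e w)‖ := by rw [hTe]
    _ ≤ ‖T‖ * ‖e w‖ := T.le_opNorm _
    _ ≤ K * ‖e w‖ := by gcongr; exact hT.le_of_lipschitz hK

theorem piSumEquivEucProd_Hmat_mulVec (w : Fin n ⊕ Fin m → ℝ) :
    piSumEquivEucProd n m (Hmat f p *ᵥ w) =
      (-(piSumEquivEucProd n m (hessMat f p *ᵥ w)).1,
        (piSumEquivEucProd n m (hessMat f p *ᵥ w)).2) := by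
  ext k <;> simp [Hmat, hessMat, Matrix.mulVec, dotProduct]

theorem norm_Hmat_mulVec_le {K : NNReal} (hf : ContDiff ℝ 2 f)
    (hK : LipschitzWith K fun q => (gradX f q, gradY f q)) (w : Fin n ⊕ Fin m → ℝ) :
    ‖piSumEquivEucProd n m (Hmat f p *ᵥ w)‖ ≤ K * ‖piSumEquivEucProd n m w‖ := by
  rw [piSumEquivEucProd_Hmat_mulVec, Prod.norm_def, norm_neg, ← Prod.norm_def]
  exact norm_hessMat_mulVec_le hf hK w

theorem norm_le_of_mem_specC_Hmat {K : NNReal} (hf : ContDiff ℝ 2 f)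
    (hK : LipschitzWith K fun q => (gradX f q, gradY f q)) {lam : ℂ}
    (hlam : lam ∈ specC (Hmat f p)) : ‖lam‖ ≤ K :=
  norm_le_of_mem_spectrum_map_ofReal (piSumEquivEucProd n m) K.coe_nonneg
    (norm_Hmat_mulVec_le hf hK) hlam

theorem Jgda_map_ofReal (α : ℝ) :
    (Jgda f α p).map Complex.ofReal = 1 + (α : ℂ) • (Hmat f p).map Complex.ofReal := by
  ext i j
  simp [Jgda, Matrix.one_apply, apply_ite]

theorem Jogda_map_ofReal (α : ℝ) :
    (Jogda f α p).map Complex.ofReal =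
      fromBlocks (1 + (2 * (α : ℂ)) • (Hmat f p).map Complex.ofReal)
        ((-(α : ℂ)) • (Hmat f p).map Complex.ofReal) 1 0 := by
  rw [Jogda, fromBlocks_map]
  congr 1 <;> ext i j <;> simp [Matrix.one_apply, apply_ite]

end

theorem gda_stable_implies_ogda_stable_general {n m : ℕ} (f : Euc n × Euc m → ℝ) (L α : ℝ)
    (hf : ContDiff ℝ 2 f)
    (hL : LipschitzWith (Real.toNNReal L) (fun p => (gradX f p, gradY f p)))
    (hα : 0 < α) (hα' : α < 1 / (2 * L))
    (pstar : Euc n × Euc m)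
    (hstable : ∀ μ ∈ specC (Jgda f α pstar), ‖μ‖ ≤ 1) :
    ∀ μ ∈ specC (Jogda f α pstar), ‖μ‖ ≤ 1 := by
  intro μ hμ
  have hL₀ : 0 < L := by
    by_contra! hL₀
    exact (one_div_nonpos.2 (by linarith)).not_gt (hα.trans hα')
  have hαL : α * L ≤ 1 / 2 := by
    rw [lt_div_iff₀ (by positivity)] at hα'
    linarith
  rw [specC, Jogda_map_ofReal] at hμ
  obtain ⟨lam, hlam, hrel⟩ :=
    Matrix.exists_mem_spectrum_of_mem_spectrum_fromBlocks (Complex.ofReal_ne_zero.2 hα.ne') hμ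
  have hlamL : ‖lam‖ ≤ L := by
    simpa [Real.coe_toNNReal _ hL₀.le] using norm_le_of_mem_specC_Hmat hf hL hlam
  have hgda : ‖1 + (α : ℂ) * lam‖ ≤ 1 :=
    hstable _ (by rw [specC, Jgda_map_ofReal]; exact Matrix.one_add_mul_mem_spectrum hlam)
  refine Complex.norm_le_one_of_mul_two_mul_sub_one_eq ?_ hgda hrel
  calc ‖(α : ℂ) * lam‖ = α * ‖lam‖ := by
        rw [norm_mul, Complex.norm_real, Real.norm_of_nonneg hα.le]
    _ ≤ α * L := by gcongr
    _ ≤ 1 / 2 := hαL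

/-- Let `f : ℝⁿ × ℝᵐ → ℝ` be twice continuously differentiable with
`∇f` Lipschitz with constant `L` and `0 < α < 1/(2L)`.  If the critical point `(x*,y*)`
is GDA-stable (every eigenvalue of the GDA Jacobian `I + αH` has modulus at most `1`),
then `(x*,y*,x*,y*)` is OGDA-stable (every eigenvalue of the OGDA Jacobian there has
modulus at most `1`). -/
theorem gda_stable_implies_ogda_stable {n m : ℕ} (f : Euc n × Euc m → ℝ) (L α : ℝ)
    (hf : ContDiff ℝ 2 f)
    (hL : LipschitzWith (Real.toNNReal L) (fun p => (gradX f p, gradY f p)))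
    (hα : 0 < α) (hα' : α < 1 / (2 * L))
    (pstar : Euc n × Euc m) (hcrit : fderiv ℝ f pstar = 0)
    (hstable : ∀ μ ∈ specC (Jgda f α pstar), ‖μ‖ ≤ 1) :
    ∀ μ ∈ specC (Jogda f α pstar), ‖μ‖ ≤ 1 :=
  gda_stable_implies_ogda_stable_general f L α hf hL hα hα' pstar hstable
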